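/- arXiv:1709.04123 — 5 statements merged into one kernel-verified Lean document; each statement's English description precedes it below -/
import Mathlib

section
/- For a seed set S of accepting nodes and any set S' of accepting nodes with S ⊆ S' ⊆ V(S), the exposed sets coincide: V(S') = V(S), and hence π(S') = π(S). -/
/-- One step of exposure: `b` hears about the product from `a`,
which requires `a` to be adjacent to `b` and `a` to be accepting. -/
def step {V : Type*} (G : SimpleGraph V) (acc : V → Prop) (a b : V) : Prop :=
  G.Adj a b ∧ acc a

/-- `reach G acc i j`: there is a path from `i` to `j` all of whose
nodes other than possibly `j` are accepting. -/
def reach {V : Type*} (G : SimpleGraph V) (acc : V → Prop) : V → V → Prop :=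
  Relation.ReflTransGen (step G acc)

/-- `V(S)`: the set of nodes exposed to the product when `S` is seeded. -/
def exposedSet {V : Type*} (G : SimpleGraph V) (acc : V → Prop) (S : Set V) : Set V :=
  {j | ∃ i ∈ S, reach G acc i j}

/-- `V^+(S)`: exposed accepting nodes. -/
def Vpos {V : Type*} (G : SimpleGraph V) (acc : V → Prop) (S : Set V) : Set V :=
  {j | j ∈ exposedSet G acc S ∧ acc j}

/-- `V^-(S)`: exposed rejecting nodes. -/
def Vneg {V : Type*} (G : SimpleGraph V) (acc : V → Prop) (S : Set V) : Set V :=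
  {j | j ∈ exposedSet G acc S ∧ ¬ acc j}

/-- Payoff `π(S) = p|V^+(S)| - q|V^-(S)|`. -/
noncomputable def payoff {V : Type*} (p q : ℝ) (G : SimpleGraph V) (acc : V → Prop)
    (S : Set V) : ℝ :=
  p * (Vpos G acc S).ncard - q * (Vneg G acc S).ncard

section exposedSet

variable {V : Type*} {G : SimpleGraph V} {acc : V → Prop} {S T : Set V}

theorem subset_exposedSet : S ⊆ exposedSet G acc S :=
  fun i hi => ⟨i, hi, Relation.ReflTransGen.refl⟩

theorem exposedSet_mono (h : S ⊆ T) : exposedSet G acc S ⊆ exposedSet G acc T :=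
  fun _ ⟨i, hi, hij⟩ => ⟨i, h hi, hij⟩

theorem exposedSet_exposedSet : exposedSet G acc (exposedSet G acc S) = exposedSet G acc S := by
  refine Set.Subset.antisymm ?_ (exposedSet_mono subset_exposedSet)
  rintro k ⟨j, ⟨i, hiS, hij⟩, hjk⟩
  exact ⟨i, hiS, hij.trans hjk⟩

theorem exposedSet_eq_of_subset_of_subset_exposedSet {S' : Set V} (h1 : S ⊆ S')
    (h2 : S' ⊆ exposedSet G acc S) : exposedSet G acc S' = exposedSet G acc S :=
  Set.Subset.antisymm ((exposedSet_mono h2).trans exposedSet_exposedSet.le) (exposedSet_mono h1)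

theorem payoff_congr_exposedSet (p q : ℝ) (h : exposedSet G acc S = exposedSet G acc T) :
    payoff p q G acc S = payoff p q G acc T := by
  simp only [payoff, Vpos, Vneg, h]

end exposedSet

theorem exposed_eq_of_between_general {V : Type*} (G : SimpleGraph V)
    (θ : V → ℝ) (φ : ℝ)
    (p q : ℝ) (S S' : Set V)
    (h1 : S ⊆ S') (h2 : S' ⊆ exposedSet G (fun v => θ v ≤ φ) S) :
    exposedSet G (fun v => θ v ≤ φ) S' = exposedSet G (fun v => θ v ≤ φ) S ∧
      payoff p q G (fun v => θ v ≤ φ) S' = payoff p q G (fun v => θ v ≤ φ) S := by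
  have hexposed := exposedSet_eq_of_subset_of_subset_exposedSet h1 h2
  exact ⟨hexposed, payoff_congr_exposedSet p q hexposed⟩

/-- For a seed set `S` of accepting nodes and any set `S'` of
accepting nodes with `S ⊆ S' ⊆ V(S)`, the exposed sets coincide,
`V(S') = V(S)`, and hence `π(S') = π(S)`. -/
theorem exposed_eq_of_between {V : Type*} [Fintype V] (G : SimpleGraph V)
    (θ : V → ℝ) (φ : ℝ) (hθ : ∀ v, θ v ∈ Set.Icc (0 : ℝ) 1) (hφ : φ ∈ Set.Icc (0 : ℝ) 1)
    (p q : ℝ) (S S' : Set V)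
    (hS : ∀ i ∈ S, θ i ≤ φ) (hS' : ∀ i ∈ S', θ i ≤ φ)
    (h1 : S ⊆ S') (h2 : S' ⊆ exposedSet G (fun v => θ v ≤ φ) S) :
    exposedSet G (fun v => θ v ≤ φ) S' = exposedSet G (fun v => θ v ≤ φ) S ∧
      payoff p q G (fun v => θ v ≤ φ) S' = payoff p q G (fun v => θ v ≤ φ) S :=
  exposed_eq_of_between_general G θ φ p q S S' h1 h2
end

section
/- There exists an instance (a graph with thresholds and p = q = 1) in which the naive seed set {i accepting : π({i}) ≥ 0} is empty and achieves payoff 0, while some seed set of accepting nodes achieves strictly positive payoff. -/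
/-! Seeding a node of one cluster exposes its two accepting nodes and the three shared rejecting
nodes, for a payoff of `2 - 3 = -1`; seeding one node in each cluster exposes all four accepting
nodes but the same three rejecting ones, for a payoff of `4 - 3 = 1`. -/

open Finset

section Exposure

variable {V : Type*} {G : SimpleGraph V} {acc : V → Prop} {a b : V} {S T E : Set V}

lemma reach_of_adj (h : G.Adj a b) (ha : acc a) : reach G acc a b :=
  .single ⟨h, ha⟩

lemma exposedSet_union :
    exposedSet G acc (S ∪ T) = exposedSet G acc S ∪ exposedSet G acc T := by
  ext j
  simp only [exposedSet, Set.mem_union, Set.mem_ofPred_eq, or_and_right, exists_or]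

lemma exposedSet_subset_of_closed (hS : S ⊆ E)
    (hE : ∀ a b, a ∈ E → step G acc a b → b ∈ E) : exposedSet G acc S ⊆ E := by
  rintro j ⟨i, hi, hij⟩
  induction hij with
  | refl => exact hS hi
  | tail _ hbc ih => exact hE _ _ ih hbc

lemma exposedSet_singleton_subset_of_reach (h : reach G acc a b) :
    exposedSet G acc {b} ⊆ exposedSet G acc {a} := by
  rintro j ⟨_, rfl, hbj⟩
  exact ⟨a, rfl, h.trans hbj⟩

lemma exposedSet_singleton_eq_of_adj (h : G.Adj a b) (ha : acc a) (hb : acc b) :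
    exposedSet G acc {a} = exposedSet G acc {b} :=
  (exposedSet_singleton_subset_of_reach (reach_of_adj h.symm hb)).antisymm
    (exposedSet_singleton_subset_of_reach (reach_of_adj h ha))

lemma exposedSet_singleton_eq [DecidableEq V] [G.LocallyFinite] (ha : acc a)
    (hcl : ∀ b ∈ G.neighborFinset a, acc b → G.neighborFinset b ⊆ insert a (G.neighborFinset a)) :
    exposedSet G acc {a} = ↑(insert a (G.neighborFinset a)) := by
  refine (exposedSet_subset_of_closed (by simp) ?_).antisymm ?_
  · rintro x y hx ⟨hxy, hxacc⟩
    rw [mem_coe, mem_insert] at hx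
    rcases hx with rfl | hx
    · exact mem_insert_of_mem (by simpa using hxy)
    · exact hcl x hx hxacc (by simpa using hxy)
  · intro j hj
    rw [coe_insert, SimpleGraph.coe_neighborFinset] at hj
    rcases hj with rfl | hj
    · exact ⟨j, rfl, .refl⟩
    · exact ⟨a, rfl, reach_of_adj hj ha⟩

lemma payoff_eq_of_exposedSet_eq [DecidablePred acc] {p q : ℝ} {F : Finset V} {m k : ℕ}
    (h : exposedSet G acc S = F) (hm : #{v ∈ F | acc v} = m) (hk : #{v ∈ F | ¬ acc v} = k) :
    payoff p q G acc S = p * m - q * k := by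
  have hpos : Vpos G acc S = ↑{v ∈ F | acc v} := by ext; simp [Vpos, h]
  have hneg : Vneg G acc S = ↑{v ∈ F | ¬ acc v} := by ext; simp [Vneg, h]
  rw [payoff, hpos, hneg, Set.ncard_coe_finset, Set.ncard_coe_finset, hm, hk]

end Exposure

namespace SevenNode

def accepting (v : Fin 7) : Prop := v.val < 4

instance : DecidablePred accepting := fun v => inferInstanceAs (Decidable (v.val < 4))

/-- Two clusters `{0, 1}` and `{2, 3}` of accepting nodes, whose hubs `0` and `2` are both
adjacent to all of the rejecting nodes `4, 5, 6`. -/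
def graph : SimpleGraph (Fin 7) :=
  SimpleGraph.fromEdgeSet {s(0, 1), s(2, 3), s(0, 4), s(0, 5), s(0, 6), s(2, 4), s(2, 5), s(2, 6)}

instance : DecidableRel graph.Adj := by unfold graph; infer_instance

def threshold (v : Fin 7) : ℝ := if accepting v then 0 else 1

lemma threshold_mem_Icc (v : Fin 7) : threshold v ∈ Set.Icc (0 : ℝ) 1 := by
  unfold threshold; split_ifs <;> norm_num

lemma threshold_le_zero_iff {v : Fin 7} : threshold v ≤ 0 ↔ accepting v := by
  by_cases h : accepting v <;> simp [threshold, h]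

lemma exposedSet_zero : exposedSet graph accepting {0} = ↑({0, 1, 4, 5, 6} : Finset (Fin 7)) := by
  rw [exposedSet_singleton_eq (by decide) (by decide), coe_inj]
  decide

lemma exposedSet_two : exposedSet graph accepting {2} = ↑({2, 3, 4, 5, 6} : Finset (Fin 7)) := by
  rw [exposedSet_singleton_eq (by decide) (by decide), coe_inj]
  decide

lemma payoff_singleton {i : Fin 7} (hi : accepting i) :
    payoff 1 1 graph accepting {i} = -1 := by
  have hE : exposedSet graph accepting {i} = ↑({0, 1, 4, 5, 6} : Finset (Fin 7)) ∨
      exposedSet graph accepting {i} = ↑({2, 3, 4, 5, 6} : Finset (Fin 7)) := by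
    fin_cases i
    · exact .inl exposedSet_zero
    · exact .inl ((exposedSet_singleton_eq_of_adj (by decide) (by decide) (by decide)).trans
        exposedSet_zero)
    · exact .inr exposedSet_two
    · exact .inr ((exposedSet_singleton_eq_of_adj (by decide) (by decide) (by decide)).trans
        exposedSet_two)
    all_goals exact absurd hi (by decide)
  rcases hE with hE | hE <;>
    rw [payoff_eq_of_exposedSet_eq hE (m := 2) (k := 3) (by decide) (by decide)] <;> norm_num

lemma payoff_pair : payoff 1 1 graph accepting {0, 2} = 1 := by
  have hE : exposedSet graph accepting {0, 2} = ↑(univ : Finset (Fin 7)) := by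
    rw [Set.insert_eq, exposedSet_union, exposedSet_zero, exposedSet_two, ← coe_union,
      coe_inj]
    decide
  rw [payoff_eq_of_exposedSet_eq hE (m := 4) (k := 3) (by decide) (by decide)]
  norm_num

end SevenNode

/-- There is an instance (graph, thresholds, quality, `p = q = 1`)
where the naive seed set `{i accepting : π({i}) ≥ 0}` is empty (payoff `0`),
yet some seed set of accepting nodes achieves strictly positive payoff. -/
theorem naive_seed_set_suboptimal :
    ∃ (n : ℕ) (G : SimpleGraph (Fin n)) (θ : Fin n → ℝ) (φ : ℝ),
      (∀ i, θ i ∈ Set.Icc (0 : ℝ) 1) ∧ φ ∈ Set.Icc (0 : ℝ) 1 ∧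
      {i : Fin n | θ i ≤ φ ∧ 0 ≤ payoff 1 1 G (fun v => θ v ≤ φ) {i}} = ∅ ∧
      ∃ S : Set (Fin n), (∀ i ∈ S, θ i ≤ φ) ∧
        0 < payoff 1 1 G (fun v => θ v ≤ φ) S := by
  refine ⟨7, SevenNode.graph, SevenNode.threshold, 0, SevenNode.threshold_mem_Icc, by norm_num,
    ?_, {0, 2}, ?_, ?_⟩
  all_goals simp only [SevenNode.threshold_le_zero_iff]
  · refine Set.eq_empty_of_forall_notMem fun i ⟨hi, hpay⟩ => ?_
    rw [SevenNode.payoff_singleton hi] at hpay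
    norm_num at hpay
  · rintro i (rfl | rfl) <;> decide
  · rw [SevenNode.payoff_pair]
    norm_num
end

section
/- Minimizing cut capacity in G_N is equivalent to maximizing payoff: for any s-t cut (X,Y) of finite capacity, capacity(X,Y) = Σ_{i∈A} p|C_i^o| − (Σ_{i ∈ A∩X} p|C_i^o| − q|R ∩ X|), and the second parenthesized term equals the payoff π of seeding the clusters indexed by A ∩ X. Hence a minimum cut (X,Y) yields an optimal seed set A ∩ X. -/
/-!
A cut of finite capacity cuts no infinite edge, so together with a cluster node it contains
that cluster's whole boundary. Its capacity is then `p·|C_i^o|` summed over the clusters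
outside it plus `q` times the number of boundary nodes inside it. Shrinking the boundary part
of such a cut to `⋃_{i ∈ T} C_i^b`, where `T` is its cluster side, keeps it finite and can
only lower the capacity, and the shrunk cut has capacity `Σ_{i∈A} p|C_i^o| − π(T)`. So a
minimum cut is of this form, and minimising capacity over these cuts maximises `π`.
-/

open scoped ENNReal

/-- Nodes of the flow network `G_N`: source `Sum.inl true`, sink `Sum.inl false`,
cluster nodes `Sum.inr (Sum.inl i)` for `i ∈ A`, boundary nodes
`Sum.inr (Sum.inr j)` for `j ∈ R`. -/
abbrev FlowNode (A R : Type*) := Bool ⊕ (A ⊕ R)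

/-- Capacities of `G_N` (`w i = |C_i^o|`, `bdry i = C_i^b`). -/
noncomputable def cap {A R : Type*} [DecidableEq R] (w : A → ℕ) (bdry : A → Finset R)
    (p q : NNReal) : FlowNode A R → FlowNode A R → ℝ≥0∞ :=
  fun x y =>
    match x, y with
    | Sum.inl true, Sum.inr (Sum.inl i) => (p : ℝ≥0∞) * (w i : ℝ≥0∞)
    | Sum.inr (Sum.inl i), Sum.inr (Sum.inr j) => if j ∈ bdry i then ⊤ else 0
    | Sum.inr (Sum.inr _), Sum.inl false => (q : ℝ≥0∞)
    | _, _ => 0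

/-- Capacity of the cut `(X, Xᶜ)`. -/
noncomputable def cutCapacity {A R : Type*} [DecidableEq R] (w : A → ℕ)
    (bdry : A → Finset R) (p q : NNReal) (X : Set (FlowNode A R)) : ℝ≥0∞ :=
  ∑' x : X, ∑' y : ↥Xᶜ, cap w bdry p q x.1 y.1

/-- Payoff of seeding one node from each cluster indexed by `T ⊆ A`:
`π(T) = Σ_{i∈T} p|C_i^o| − q·|⋃_{i∈T} C_i^b|` (interiors are disjoint). -/
noncomputable def clusterPayoff {A R : Type*} [DecidableEq R] (w : A → ℕ)
    (bdry : A → Finset R) (p q : NNReal) (T : Set A) : ℝ :=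
  (∑' i : T, (p : ℝ) * (w i.1 : ℝ)) - (q : ℝ) * (⋃ i ∈ T, (bdry i : Set R)).ncard


section SeedCut

variable {A R : Type*}

def seedCut (bdry : A → Finset R) (T : Set A) : Set (FlowNode A R)
  | .inl b => b = true
  | .inr (.inl i) => i ∈ T
  | .inr (.inr j) => j ∈ ⋃ i ∈ T, (bdry i : Set R)

variable {bdry : A → Finset R}

theorem source_mem_seedCut (T : Set A) : .inl true ∈ seedCut bdry T := rfl

theorem sink_notMem_seedCut (T : Set A) : .inl false ∉ seedCut bdry T := Bool.false_ne_true

theorem seedCut_closed (T : Set A) {i : A} {j : R} (hi : .inr (.inl i) ∈ seedCut bdry T)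
    (hj : j ∈ bdry i) : .inr (.inr j) ∈ seedCut bdry T :=
  Set.mem_biUnion hi hj

end SeedCut

section CutCapacity

open Finset

variable {A R : Type*} [DecidableEq R] {w : A → ℕ} {bdry : A → Finset R} {p q : NNReal}

theorem cutCapacity_eq_sum [Fintype A] [Fintype R] (Y : Set (FlowNode A R))
    [DecidablePred (· ∈ Y)] :
    cutCapacity w bdry p q Y =
      ∑ x with x ∈ Y, ∑ y with y ∉ Y, cap w bdry p q x y := by
  simp only [cutCapacity, tsum_fintype]
  rw [← sum_subtype {x | x ∈ Y} (by simp) (fun x => ∑ y : ↥Yᶜ, cap w bdry p q x y)]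
  exact sum_congr rfl fun x _ => (sum_subtype _ (by simp) _).symm

theorem mem_of_cutCapacity_ne_top {Y : Set (FlowNode A R)} (hY : cutCapacity w bdry p q Y ≠ ⊤)
    {i : A} {j : R} (hi : .inr (.inl i) ∈ Y) (hj : j ∈ bdry i) : .inr (.inr j) ∈ Y := by
  by_contra hjY
  refine hY (eq_top_iff.2 ?_)
  calc ⊤ = cap w bdry p q (.inr (.inl i)) (.inr (.inr j)) := by simp [cap, hj]
    _ ≤ ∑' y : ↥Yᶜ, cap w bdry p q (.inr (.inl i)) y.1 := ENNReal.le_tsum (⟨_, hjY⟩ : ↥Yᶜ)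
    _ ≤ cutCapacity w bdry p q Y := ENNReal.le_tsum (⟨_, hi⟩ : ↥Y)

theorem cutCapacity_eq_of_closed [Fintype A] [Fintype R] (Y : Set (FlowNode A R))
    [DecidablePred (· ∈ Y)] (hs : .inl true ∈ Y) (ht : .inl false ∉ Y)
    (hY : ∀ i j, .inr (.inl i) ∈ Y → j ∈ bdry i → .inr (.inr j) ∈ Y) :
    cutCapacity w bdry p q Y =
      ∑ i with .inr (.inl i) ∉ Y, (p : ℝ≥0∞) * w i + q * #{j | .inr (.inr j) ∈ Y} := by
  rw [cutCapacity_eq_sum]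
  have hcross : ∀ i j, .inr (.inl i) ∈ Y → .inr (.inr j) ∉ Y → j ∉ bdry i :=
    fun i j hi hjY hj => hjY (hY i j hi hj)
  simp +contextual [sum_filter, Fintype.sum_sum_type, cap, hs, ht, hcross]
  rw [← sum_filter, sum_const, nsmul_eq_mul, mul_comm]

theorem cutCapacity_ne_top_of_closed [Fintype A] [Fintype R] {Y : Set (FlowNode A R)}
    (hs : .inl true ∈ Y) (ht : .inl false ∉ Y)
    (hY : ∀ i j, .inr (.inl i) ∈ Y → j ∈ bdry i → .inr (.inr j) ∈ Y) :
    cutCapacity w bdry p q Y ≠ ⊤ := by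
  classical
  rw [cutCapacity_eq_of_closed Y hs ht hY]
  exact ENNReal.add_ne_top.2 ⟨ENNReal.sum_ne_top.2 fun _ _ => by finiteness, by finiteness⟩

theorem toReal_cutCapacity [Fintype A] [Fintype R] {Y : Set (FlowNode A R)}
    (hs : .inl true ∈ Y) (ht : .inl false ∉ Y) (hY : cutCapacity w bdry p q Y ≠ ⊤) :
    (cutCapacity w bdry p q Y).toReal =
      (∑' i : A, (p : ℝ) * w i) -
        ((∑' i : {i : A // .inr (.inl i) ∈ Y}, (p : ℝ) * w i.1) -
          q * {j : R | .inr (.inr j) ∈ Y}.ncard) := by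
  classical
  have hcap := cutCapacity_eq_of_closed (w := w) (p := p) (q := q) Y hs ht
    fun _ _ => mem_of_cutCapacity_ne_top hY
  obtain ⟨hA, hR⟩ := ENNReal.add_ne_top.1 (hcap ▸ hY)
  rw [hcap, ENNReal.toReal_add hA hR, ENNReal.toReal_sum fun _ _ => by finiteness, tsum_fintype,
    tsum_fintype, ← sum_subtype {i | .inr (.inl i) ∈ Y} (by simp) fun i => (p : ℝ) * w i,
    Set.ncard_eq_toFinset_card', Set.toFinset_ofPred]
  simp only [ENNReal.toReal_mul, ENNReal.coe_toReal, ENNReal.toReal_natCast]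
  linarith [sum_filter_add_sum_filter_not univ (fun i => .inr (.inl i) ∈ Y) fun i => (p : ℝ) * w i]

theorem cutCapacity_seedCut_ne_top [Fintype A] [Fintype R] (T : Set A) :
    cutCapacity w bdry p q (seedCut bdry T) ≠ ⊤ :=
  cutCapacity_ne_top_of_closed (source_mem_seedCut T) (sink_notMem_seedCut T)
    fun _ _ => seedCut_closed T

theorem toReal_cutCapacity_seedCut [Fintype A] [Fintype R] (T : Set A) :
    (cutCapacity w bdry p q (seedCut bdry T)).toReal =
      (∑' i : A, (p : ℝ) * w i) - clusterPayoff w bdry p q T :=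
  toReal_cutCapacity (source_mem_seedCut T) (sink_notMem_seedCut T) (cutCapacity_seedCut_ne_top T)

theorem cutCapacity_seedCut_le [Fintype A] [Fintype R] {Y : Set (FlowNode A R)}
    (hs : .inl true ∈ Y) (ht : .inl false ∉ Y) (hY : cutCapacity w bdry p q Y ≠ ⊤) :
    cutCapacity w bdry p q (seedCut bdry {i | .inr (.inl i) ∈ Y}) ≤ cutCapacity w bdry p q Y := by
  classical
  rw [cutCapacity_eq_of_closed _ (source_mem_seedCut _) (sink_notMem_seedCut _)
      fun _ _ => seedCut_closed _,
    cutCapacity_eq_of_closed Y hs ht fun _ _ => mem_of_cutCapacity_ne_top hY]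
  gcongr _ + _ * ?_
  refine Nat.cast_le.2 (card_le_card fun j hj => ?_)
  simp only [mem_filter, mem_univ, true_and] at hj ⊢
  obtain ⟨i, hi, hij⟩ := Set.mem_iUnion₂.1 hj
  exact mem_of_cutCapacity_ne_top hY hi hij

end CutCapacity

/-- For any finite-capacity `s`-`t` cut `(X, Y)` of `G_N`,
`capacity(X,Y) = Σ_{i∈A} p|C_i^o| − (Σ_{i∈A∩X} p|C_i^o| − q|R∩X|)`; for a
minimum cut `(X, Y)` the parenthesized term is exactly the payoff of seeding
the clusters indexed by `A ∩ X`, and `A ∩ X` is an optimal seed set. -/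
theorem min_cut_gives_optimal_seed_set {A R : Type*} [Fintype A] [Fintype R]
    [DecidableEq R] (w : A → ℕ) (bdry : A → Finset R) (p q : NNReal)
    (X : Set (FlowNode A R))
    (hs : (Sum.inl true : FlowNode A R) ∈ X)
    (ht : (Sum.inl false : FlowNode A R) ∉ X)
    (hmin : ∀ Y : Set (FlowNode A R), (Sum.inl true : FlowNode A R) ∈ Y →
      (Sum.inl false : FlowNode A R) ∉ Y →
      cutCapacity w bdry p q X ≤ cutCapacity w bdry p q Y) :
    (∀ Y : Set (FlowNode A R), (Sum.inl true : FlowNode A R) ∈ Y →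
      (Sum.inl false : FlowNode A R) ∉ Y → cutCapacity w bdry p q Y ≠ ⊤ →
      (cutCapacity w bdry p q Y).toReal =
        (∑' i : A, (p : ℝ) * (w i : ℝ)) -
          ((∑' i : {i : A // Sum.inr (Sum.inl i) ∈ Y}, (p : ℝ) * (w i.1 : ℝ)) -
            (q : ℝ) * ({j : R | Sum.inr (Sum.inr j) ∈ Y}.ncard : ℝ))) ∧
    (cutCapacity w bdry p q X).toReal =
      (∑' i : A, (p : ℝ) * (w i : ℝ)) -
        clusterPayoff w bdry p q {i : A | Sum.inr (Sum.inl i) ∈ X} ∧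
    (∀ T : Set A, clusterPayoff w bdry p q T ≤
      clusterPayoff w bdry p q {i : A | Sum.inr (Sum.inl i) ∈ X}) := by
  have hmin_seed (T : Set A) :=
    hmin (seedCut bdry T) (source_mem_seedCut T) (sink_notMem_seedCut T)
  have hX : cutCapacity w bdry p q X ≠ ⊤ :=
    ne_top_of_le_ne_top (cutCapacity_seedCut_ne_top ∅) (hmin_seed ∅)
  have hX_payoff : (cutCapacity w bdry p q X).toReal =
      (∑' i : A, (p : ℝ) * w i) - clusterPayoff w bdry p q {i | .inr (.inl i) ∈ X} := by
    rw [le_antisymm (hmin_seed _) (cutCapacity_seedCut_le hs ht hX), toReal_cutCapacity_seedCut]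
  refine ⟨fun Y hsY htY hY => toReal_cutCapacity hsY htY hY, hX_payoff, fun T => ?_⟩
  have hle := (ENNReal.toReal_le_toReal hX (cutCapacity_seedCut_ne_top T)).2 (hmin_seed T)
  rw [hX_payoff, toReal_cutCapacity_seedCut] at hle
  linarith
end

section
/- In the generalized model, adding all Type III agents to any seed set weakly increases the payoff: π(S) ≤ π(S ∪ T_3). -/
/-- Type I agents: `φ < τ_i` (they ignore the product). -/
def T1 {V : Type*} (τ : V → ℝ) (φ : ℝ) : Set V := {i | φ < τ i}

/-- Type II agents: `τ_i ≤ φ < θ_i` (they view but reject the product). -/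
def T2 {V : Type*} (τ θ : V → ℝ) (φ : ℝ) : Set V := {i | τ i ≤ φ ∧ φ < θ i}

/-- Type III agents: `θ_i ≤ φ < σ_i` (they accept but do not advertise). -/
def T3 {V : Type*} (θ σ : V → ℝ) (φ : ℝ) : Set V := {i | θ i ≤ φ ∧ φ < σ i}

/-- Type IV agents: `σ_i ≤ φ` (they accept and advertise to all neighbors). -/
def T4 {V : Type*} (σ : V → ℝ) (φ : ℝ) : Set V := {i | σ i ≤ φ}

/-- `V(S)` in the generalized model: agents reachable from the seed set `S`
by a path all of whose internal nodes are Type IV (advertising) agents. -/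
def gExposed {V : Type*} (G : SimpleGraph V) (σ : V → ℝ) (φ : ℝ) (S : Set V) : Set V :=
  {j | ∃ i ∈ S, Relation.ReflTransGen (fun a b => G.Adj a b ∧ σ a ≤ φ) i j}

/-- Generalized payoff:
`π(S) = p·|V(S) ∩ (T_3 ∪ T_4)| − q·|V(S) ∩ T_2|`. -/
noncomputable def gPayoff {V : Type*} (p q : ℝ) (G : SimpleGraph V)
    (τ θ σ : V → ℝ) (φ : ℝ) (S : Set V) : ℝ :=
  p * ((gExposed G σ φ S ∩ (T3 θ σ φ ∪ T4 σ φ)).ncard : ℝ)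
    - q * ((gExposed G σ φ S ∩ T2 τ θ φ).ncard : ℝ)

/-! Type III agents do not advertise, so seeding them exposes nobody but themselves:
`V(S ∪ T₃) = V(S) ∪ T₃`. Hence the newly exposed agents are all of Type III: they add to
the positive part of the payoff and, being disjoint from `T₂`, leave the negative part unchanged. -/

section

variable {V : Type*} (G : SimpleGraph V) (σ : V → ℝ) (φ : ℝ)

lemma gExposed_union (S A : Set V) :
    gExposed G σ φ (S ∪ A) = gExposed G σ φ S ∪ gExposed G σ φ A := by
  ext j
  simp only [gExposed, Set.mem_union, Set.mem_ofPred_eq, or_and_right, exists_or]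

lemma gExposed_eq_self_of_forall_lt {A : Set V} (hA : ∀ i ∈ A, φ < σ i) :
    gExposed G σ φ A = A := by
  ext j
  constructor
  · rintro ⟨i, hi, hij⟩
    rcases hij.cases_head with rfl | ⟨_, ⟨_, hσ⟩, _⟩
    · exact hi
    · exact absurd hσ (hA i hi).not_ge
  · exact fun hj => ⟨j, hj, .refl⟩

lemma gExposed_T3 (θ : V → ℝ) : gExposed G σ φ (T3 θ σ φ) = T3 θ σ φ :=
  gExposed_eq_self_of_forall_lt G σ φ fun _ hi => hi.2

end

lemma disjoint_T2_T3 {V : Type*} (τ θ σ : V → ℝ) (φ : ℝ) : Disjoint (T2 τ θ φ) (T3 θ σ φ) :=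
  Set.disjoint_left.2 fun _ h2 h3 => h2.2.not_ge h3.1

lemma gPayoff_le_gPayoff {V : Type*} [Finite V] (G : SimpleGraph V) (τ θ σ : V → ℝ) (φ p q : ℝ)
    (hp : 0 ≤ p) {S S' : Set V} (hsub : gExposed G σ φ S ⊆ gExposed G σ φ S')
    (hT2 : gExposed G σ φ S' ∩ T2 τ θ φ ⊆ gExposed G σ φ S) :
    gPayoff p q G τ θ σ φ S ≤ gPayoff p q G τ θ σ φ S' := by
  have hT2_eq : gExposed G σ φ S' ∩ T2 τ θ φ = gExposed G σ φ S ∩ T2 τ θ φ :=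
    (Set.subset_inter hT2 Set.inter_subset_right).antisymm (Set.inter_subset_inter_left _ hsub)
  have hcard : (gExposed G σ φ S ∩ (T3 θ σ φ ∪ T4 σ φ)).ncard
      ≤ (gExposed G σ φ S' ∩ (T3 θ σ φ ∪ T4 σ φ)).ncard :=
    Set.ncard_le_ncard (Set.inter_subset_inter_left _ hsub)
  unfold gPayoff
  rw [hT2_eq]
  gcongr

theorem gPayoff_union_T3_general {V : Type*} [Fintype V] (G : SimpleGraph V)
    (τ θ σ : V → ℝ) (φ : ℝ) (p q : ℝ) (hp : 0 < p) (S : Set V) :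
    gPayoff p q G τ θ σ φ S ≤ gPayoff p q G τ θ σ φ (S ∪ T3 θ σ φ) := by
  have hunion : gExposed G σ φ (S ∪ T3 θ σ φ) = gExposed G σ φ S ∪ T3 θ σ φ := by
    rw [gExposed_union, gExposed_T3]
  apply gPayoff_le_gPayoff G τ θ σ φ p q hp.le <;> rw [hunion]
  · exact Set.subset_union_left
  · rintro j ⟨hj | hj, hj2⟩
    · exact hj
    · exact absurd hj ((disjoint_T2_T3 τ θ σ φ).notMem_of_mem_left hj2)

/-- In the generalized model, adding all Type III agents to any
seed set weakly increases the payoff: `π(S) ≤ π(S ∪ T_3)`. -/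
theorem gPayoff_union_T3 {V : Type*} [Fintype V] (G : SimpleGraph V)
    (τ θ σ : V → ℝ) (φ : ℝ) (p q : ℝ) (hp : 0 < p) (hq : 0 < q)
    (hord : ∀ i, τ i ≤ θ i ∧ θ i ≤ σ i) (S : Set V) :
    gPayoff p q G τ θ σ φ S ≤ gPayoff p q G τ θ σ φ (S ∪ T3 θ σ φ) :=
  gPayoff_union_T3_general G τ θ σ φ p q hp S
end

section
/- In the clique reduction, if S is a set of k mutually adjacent nodes of a d-regular graph G, then in the subdivided graph G' the seed set S is exposed to exactly kd − C(k,2) rejecting (subdivision) nodes, so its payoff is kp − (kd − C(k,2)), which is strictly positive when p = d − (k−1)/2 + ε with 0 < ε. -/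
/-- The graph `G'` obtained from `G` by subdividing every edge: its nodes are
the original nodes (`Sum.inl v`) and one subdivision node per edge
(`Sum.inr e`), with `Sum.inl v` adjacent to `Sum.inr e` iff `v` is an
endpoint of `e`. -/
def subdiv {V : Type*} (G : SimpleGraph V) : SimpleGraph (V ⊕ G.edgeSet) where
  Adj x y :=
    (∃ (v : V) (e : G.edgeSet), x = Sum.inl v ∧ y = Sum.inr e ∧ v ∈ (e : Sym2 V)) ∨
    (∃ (v : V) (e : G.edgeSet), y = Sum.inl v ∧ x = Sum.inr e ∧ v ∈ (e : Sym2 V))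
  symm := by
    constructor
    rintro x y (h | h)
    · exact Or.inr h
    · exact Or.inl h
  loopless := by
    constructor
    rintro x (⟨v, e, h1, h2, _⟩ | ⟨v, e, h1, h2, _⟩) <;> subst h1 <;> simp at h2

/-- In `G'`, original nodes are accepting and subdivision nodes are rejecting. -/
def subdivAcc {V : Type*} (G : SimpleGraph V) : V ⊕ G.edgeSet → Prop :=
  fun x => x.isLeft = true

open Finset

namespace Sym2

variable {α : Type*} [DecidableEq α]

theorem card_filter_mem_of_not_isDiag (S : Finset α) {z : Sym2 α} (hz : ¬z.IsDiag) :
    #{v ∈ S | v ∈ z} = (if ∃ v ∈ S, v ∈ z then 1 else 0) + if z ∈ S.sym2 then 1 else 0 := by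
  induction z using Sym2.ind with
  | _ a b =>
    have hab : a ≠ b := by simpa using hz
    have hfilter : ({v ∈ S | v ∈ s(a, b)} : Finset α) = S ∩ {a, b} := by ext; simp [and_comm]
    have hmeet : (∃ v ∈ S, v ∈ s(a, b)) ↔ a ∈ S ∨ b ∈ S := by
      simp only [mem_iff, and_or_left, exists_or, exists_eq_right]
    simp only [hfilter, hmeet, mk_mem_sym2_iff]
    by_cases ha : a ∈ S <;> by_cases hb : b ∈ S <;>
      simp [ha, hb, hab, inter_insert_of_mem, inter_insert_of_notMem]

end Sym2

namespace SimpleGraph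

variable {V : Type*} [Fintype V] [DecidableEq V]

theorem card_edges_meeting_add_card_edges_within (G : SimpleGraph V) [DecidableRel G.Adj]
    (S : Finset V) :
    #{e ∈ G.edgeFinset | ∃ v ∈ S, v ∈ e} + #{e ∈ G.edgeFinset | e ∈ S.sym2} =
      ∑ v ∈ S, G.degree v := by
  have hdeg : ∀ v, G.degree v = #(G.edgeFinset.bipartiteAbove (· ∈ ·) v) := fun v => by
    rw [← card_incidenceFinset_eq_degree, incidenceFinset_eq_filter]
    rfl
  rw [sum_congr rfl fun v _ => hdeg v, sum_card_bipartiteAbove_eq_sum_card_bipartiteBelow,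
    card_filter, card_filter, ← sum_add_distrib]
  refine sum_congr rfl fun e he => (Sym2.card_filter_mem_of_not_isDiag S ?_).symm
  exact G.not_isDiag_of_mem_edgeSet (mem_edgeFinset.mp he)

variable {G : SimpleGraph V} [DecidableRel G.Adj]

theorem IsClique.card_edges_within {S : Finset V} (hS : G.IsClique (S : Set V)) :
    #{e ∈ G.edgeFinset | e ∈ S.sym2} = (#S).choose 2 := by
  have hedges : {e ∈ G.edgeFinset | e ∈ S.sym2} = {z ∈ S.sym2 | ¬z.IsDiag} := by
    ext z
    induction z using Sym2.ind with
    | _ a b =>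
      simp only [mem_filter, mem_edgeFinset, mem_edgeSet, mk_mem_sym2_iff, Sym2.mk_isDiag_iff]
      exact ⟨fun ⟨hadj, hab⟩ => ⟨hab, hadj.ne⟩, fun ⟨⟨ha, hb⟩, hne⟩ => ⟨hS ha hb hne, ha, hb⟩⟩
  rw [hedges, sym2_eq_image, Sym2.filter_image_mk_not_isDiag, Sym2.card_image_offDiag]

theorem IsClique.card_edges_meeting_add_choose_two {d : ℕ} (hreg : G.IsRegularOfDegree d)
    {S : Finset V} (hS : G.IsClique (S : Set V)) :
    #{e ∈ G.edgeFinset | ∃ v ∈ S, v ∈ e} + (#S).choose 2 = #S * d := by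
  rw [← hS.card_edges_within, card_edges_meeting_add_card_edges_within,
    sum_congr rfl fun v _ => hreg v, sum_const, smul_eq_mul]

end SimpleGraph

section Subdivision

variable {V : Type*} (G : SimpleGraph V)

theorem reach_subdiv_inl_iff (i : V) (x : V ⊕ G.edgeSet) :
    reach (subdiv G) (subdivAcc G) (Sum.inl i) x ↔
      x = Sum.inl i ∨ ∃ e : G.edgeSet, x = Sum.inr e ∧ i ∈ (e : Sym2 V) := by
  constructor
  · intro h
    induction h with
    | refl => exact .inl rfl
    | tail _ hstep ih =>
      obtain ⟨hadj, hacc⟩ := hstep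
      rcases ih with rfl | ⟨e, rfl, -⟩
      · rcases hadj with ⟨v, e, hv, rfl, hve⟩ | ⟨v, e, -, h, -⟩
        · exact .inr ⟨e, rfl, Sum.inl.inj hv ▸ hve⟩
        · exact (Sum.inl_ne_inr h).elim
      · simp [subdivAcc] at hacc
  · rintro (rfl | ⟨e, rfl, he⟩)
    · exact .refl
    · exact .single ⟨.inl ⟨i, e, rfl, rfl, he⟩, rfl⟩

theorem exposedSet_subdiv (S : Set V) :
    exposedSet (subdiv G) (subdivAcc G) (Sum.inl '' S) =
      Sum.inl '' S ∪ Sum.inr '' {e : G.edgeSet | ∃ v ∈ S, v ∈ (e : Sym2 V)} := by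
  ext x
  simp only [exposedSet, Set.mem_ofPred_eq]
  rw [Set.exists_mem_image]
  simp only [reach_subdiv_inl_iff, Set.mem_union, Set.mem_image]
  constructor
  · rintro ⟨i, hi, rfl | ⟨e, rfl, he⟩⟩
    · exact .inl ⟨i, hi, rfl⟩
    · exact .inr ⟨e, ⟨i, hi, he⟩, rfl⟩
  · rintro (⟨i, hi, rfl⟩ | ⟨e, ⟨i, hi, he⟩, rfl⟩)
    · exact ⟨i, hi, .inl rfl⟩
    · exact ⟨i, hi, .inr ⟨e, rfl, he⟩⟩

theorem Vpos_subdiv (S : Set V) :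
    Vpos (subdiv G) (subdivAcc G) (Sum.inl '' S) = Sum.inl '' S := by
  ext (v | e) <;> simp [Vpos, exposedSet_subdiv, subdivAcc]

theorem Vneg_subdiv (S : Set V) :
    Vneg (subdiv G) (subdivAcc G) (Sum.inl '' S) =
      Sum.inr '' {e : G.edgeSet | ∃ v ∈ S, v ∈ (e : Sym2 V)} := by
  ext (v | e) <;> simp [Vneg, exposedSet_subdiv, subdivAcc]

theorem ncard_Vpos_subdiv (S : Finset V) :
    (Vpos (subdiv G) (subdivAcc G) (Sum.inl '' (S : Set V))).ncard = #S := by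
  rw [Vpos_subdiv, Set.ncard_image_of_injective _ Sum.inl_injective, Set.ncard_coe_finset]

theorem ncard_Vneg_subdiv [Fintype V] [DecidableEq V] [DecidableRel G.Adj] (S : Finset V) :
    (Vneg (subdiv G) (subdivAcc G) (Sum.inl '' (S : Set V))).ncard =
      #{e ∈ G.edgeFinset | ∃ v ∈ S, v ∈ e} := by
  rw [Vneg_subdiv, Set.ncard_image_of_injective _ Sum.inr_injective,
    ← Set.ncard_image_of_injective _ Subtype.val_injective, ← Set.ncard_coe_finset]
  congr 1
  ext z
  simp [and_comm]

end Subdivision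

theorem clique_seed_positive_payoff_general {V : Type*} [Fintype V] [DecidableEq V]
    (G : SimpleGraph V) [DecidableRel G.Adj] (d k : ℕ)
    (hreg : ∀ v, G.degree v = d) (hk : 2 ≤ k)
    (S : Finset V) (hcard : S.card = k)
    (hclique : ∀ i ∈ S, ∀ j ∈ S, i ≠ j → G.Adj i j)
    (p ε : ℝ) (hε : 0 < ε) (hp : p = (d : ℝ) - ((k : ℝ) - 1) / 2 + ε) :
    (Vneg (subdiv G) (subdivAcc G) (Sum.inl '' (S : Set V))).ncard
        = k * d - k.choose 2 ∧
    payoff p 1 (subdiv G) (subdivAcc G) (Sum.inl '' (S : Set V)) =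
      (k : ℝ) * p - ((k : ℝ) * (d : ℝ) - (k.choose 2 : ℝ)) ∧
    0 < payoff p 1 (subdiv G) (subdivAcc G) (Sum.inl '' (S : Set V)) := by
  have hS : G.IsClique (S : Set V) := fun i hi j hj hij => hclique i hi j hj hij
  have hcount : #{e ∈ G.edgeFinset | ∃ v ∈ S, v ∈ e} + k.choose 2 = k * d := by
    rw [← hcard]
    exact hS.card_edges_meeting_add_choose_two hreg
  have hcount_real : (#{e ∈ G.edgeFinset | ∃ v ∈ S, v ∈ e} : ℝ) = k * d - k.choose 2 := by
    rw [eq_sub_iff_add_eq]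
    exact_mod_cast hcount
  have hpay : payoff p 1 (subdiv G) (subdivAcc G) (Sum.inl '' (S : Set V)) =
      (k : ℝ) * p - ((k : ℝ) * (d : ℝ) - (k.choose 2 : ℝ)) := by
    rw [payoff, ncard_Vpos_subdiv, ncard_Vneg_subdiv, hcount_real, hcard, one_mul, mul_comm]
  refine ⟨by rw [ncard_Vneg_subdiv]; omega, hpay, ?_⟩
  calc (0 : ℝ) < k * ε := mul_pos (Nat.cast_pos.mpr (by omega)) hε
    _ = _ := by rw [hpay, hp, Nat.cast_choose_two]; ring

/-- In the clique reduction, if `S` is a set of `k` mutually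
adjacent nodes of a `d`-regular graph `G`, then in the subdivided graph `G'`
the seed set `S` is exposed to exactly `kd − C(k,2)` rejecting (subdivision)
nodes, so its payoff is `kp − (kd − C(k,2))`, which is strictly positive when
`p = d − (k−1)/2 + ε` with `ε > 0` (and `q = 1`). -/
theorem clique_seed_positive_payoff {V : Type*} [Fintype V] [DecidableEq V]
    (G : SimpleGraph V) [DecidableRel G.Adj] (d k : ℕ)
    (hreg : ∀ v, G.degree v = d) (hk : 2 ≤ k) (hkd : k ≤ d)
    (S : Finset V) (hcard : S.card = k)
    (hclique : ∀ i ∈ S, ∀ j ∈ S, i ≠ j → G.Adj i j)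
    (p ε : ℝ) (hε : 0 < ε) (hp : p = (d : ℝ) - ((k : ℝ) - 1) / 2 + ε) :
    (Vneg (subdiv G) (subdivAcc G) (Sum.inl '' (S : Set V))).ncard
        = k * d - k.choose 2 ∧
    payoff p 1 (subdiv G) (subdivAcc G) (Sum.inl '' (S : Set V)) =
      (k : ℝ) * p - ((k : ℝ) * (d : ℝ) - (k.choose 2 : ℝ)) ∧
    0 < payoff p 1 (subdiv G) (subdivAcc G) (Sum.inl '' (S : Set V)) :=
  clique_seed_positive_payoff_general G d k hreg hk S hcard hclique p ε hε hp
end
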